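/- arXiv:2208.03858 — 2 statements merged into one kernel-verified Lean document; each statement's English description precedes it below -/
import Mathlib

section
/- Let n ≥ q ≥ 1 be integers, let v ∈ ℝⁿ have all entries positive, let X ∈ F_v, and let X⊥ be an n×(n−q) real matrix such that (X X⊥) is orthogonal. Then T_X and N_X are linear subspaces of ℝ^{n×q} and N_X equals the orthogonal complement of T_X with respect to the Frobenius inner product ⟨U,V⟩ = trace(UᵀV). -/
open Matrix

/-
The orthogonal matrix `(X Xp)` gives coordinates `U ↦ (Xᵀ U, Xpᵀ U)` in which the trace pairing
splits as a sum, and in which `T_X = Skew × {K | K w = 0}` and `N_X = Sym × {u wᵀ}` with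
`w = Xᵀ v`. In each factor the two sets are mutually orthogonal and add up to everything
(`A = ½(A + Aᵀ) + ½(A - Aᵀ)`, and `K = u wᵀ + (K - u wᵀ)` for `u = K w / ‖w‖²`), so each is the
orthogonal complement of the other. Hence `T_X` and `N_X` are each other's orthogonal
complements, and in particular subspaces.
-/

namespace Matrix

variable {m n k l : Type*}

theorem exists_symm_add_skew (U : Matrix n n ℝ) :
    ∃ S ∈ {S : Matrix n n ℝ | Sᵀ = S}, ∃ Ω ∈ {Ω : Matrix n n ℝ | Ωᵀ = -Ω}, U = S + Ω := by
  refine ⟨(1 / 2 : ℝ) • (U + Uᵀ), ?_, (1 / 2 : ℝ) • (U - Uᵀ), ?_, ?_⟩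
  · simp [add_comm]
  · simp [← smul_neg]
  · rw [← smul_add, add_add_sub_cancel, ← two_smul ℝ U, smul_smul]
    norm_num

theorem exists_vecMulVec_add_of_mulVec_eq_zero [Fintype n] (w : n → ℝ) (K : Matrix m n ℝ) :
    ∃ p ∈ Set.range (vecMulVec · w), ∃ q ∈ {K : Matrix m n ℝ | K *ᵥ w = 0}, K = p + q := by
  by_cases hw : w = 0
  · subst hw
    exact ⟨0, ⟨0, zero_vecMulVec 0⟩, K, mulVec_zero K, (zero_add K).symm⟩
  set u := (w ⬝ᵥ w)⁻¹ • (K *ᵥ w)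
  refine ⟨vecMulVec u w, ⟨u, rfl⟩, K - vecMulVec u w, ?_, (add_sub_cancel _ _).symm⟩
  change (K - vecMulVec u w) *ᵥ w = 0
  rw [sub_mulVec, vecMulVec_mulVec, op_smul_eq_smul, smul_smul,
    mul_inv_cancel₀ (mt dotProduct_self_eq_zero.mp hw), one_smul, sub_self]

section TraceOrthogonal

variable [Fintype m] [Fintype n]

theorem trace_transpose_mul_comm (A B : Matrix m n ℝ) : trace (Aᵀ * B) = trace (Bᵀ * A) := by
  rw [← trace_transpose, transpose_mul, transpose_transpose]

theorem trace_transpose_mul_self_eq_zero_iff {A : Matrix m n ℝ} : trace (Aᵀ * A) = 0 ↔ A = 0 := by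
  rw [← conjTranspose_eq_transpose_of_trivial]
  exact trace_conjTranspose_mul_self_eq_zero_iff

def traceOrthogonal (S : Set (Matrix m n ℝ)) : Submodule ℝ (Matrix m n ℝ) where
  carrier := {U | ∀ V ∈ S, trace (Uᵀ * V) = 0}
  add_mem' hU hU' V hV := by
    rw [transpose_add, Matrix.add_mul, trace_add, hU V hV, hU' V hV, add_zero]
  zero_mem' V _ := by simp
  smul_mem' c U hU V hV := by rw [transpose_smul, smul_mul, trace_smul, hU V hV, smul_zero]

theorem mem_traceOrthogonal {S : Set (Matrix m n ℝ)} {U : Matrix m n ℝ} :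
    U ∈ traceOrthogonal S ↔ ∀ V ∈ S, trace (Uᵀ * V) = 0 :=
  Iff.rfl

/-- The `P`-component `p` of `U = p + q ⊥ P` has `⟨p, p⟩ = ⟨U, p⟩ - ⟨q, p⟩ = 0`. -/
theorem coe_traceOrthogonal_eq_of_forall_eq_add {P Q : Set (Matrix m n ℝ)}
    (hPQ : ∀ p ∈ P, ∀ q ∈ Q, trace (pᵀ * q) = 0)
    (hPQ_top : ∀ U, ∃ p ∈ P, ∃ q ∈ Q, U = p + q) :
    (traceOrthogonal P : Set (Matrix m n ℝ)) = Q := by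
  ext U
  constructor
  · intro hU
    obtain ⟨p, hp, q, hq, rfl⟩ := hPQ_top U
    have hpp : trace (pᵀ * p) = 0 := by
      have hUp := hU p hp
      rwa [transpose_add, Matrix.add_mul, trace_add, trace_transpose_mul_comm q,
        hPQ p hp q hq, add_zero] at hUp
    rwa [trace_transpose_mul_self_eq_zero_iff.mp hpp, zero_add]
  · intro hq p hp
    rw [trace_transpose_mul_comm]
    exact hPQ p hp U hq

theorem trace_transpose_mul_eq_zero_of_symm_of_skew {S Ω : Matrix n n ℝ} (hS : Sᵀ = S)
    (hΩ : Ωᵀ = -Ω) : trace (Sᵀ * Ω) = 0 := by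
  have h := trace_transpose (S * Ω)
  rw [transpose_mul, hΩ, hS, neg_mul, trace_neg, trace_mul_comm] at h
  rw [hS]
  linarith

theorem coe_traceOrthogonal_symm :
    (traceOrthogonal {S : Matrix n n ℝ | Sᵀ = S} : Set (Matrix n n ℝ)) = {Ω | Ωᵀ = -Ω} :=
  coe_traceOrthogonal_eq_of_forall_eq_add
    (fun _ hS _ hΩ => trace_transpose_mul_eq_zero_of_symm_of_skew hS hΩ) exists_symm_add_skew

theorem coe_traceOrthogonal_skew :
    (traceOrthogonal {Ω : Matrix n n ℝ | Ωᵀ = -Ω} : Set (Matrix n n ℝ)) = {S | Sᵀ = S} := by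
  refine coe_traceOrthogonal_eq_of_forall_eq_add (fun Ω hΩ S hS => ?_) fun U => ?_
  · rw [trace_transpose_mul_comm]
    exact trace_transpose_mul_eq_zero_of_symm_of_skew hS hΩ
  · obtain ⟨S, hS, Ω, hΩ, rfl⟩ := exists_symm_add_skew U
    exact ⟨Ω, hΩ, S, hS, add_comm S Ω⟩

theorem trace_transpose_vecMulVec_mul (u : m → ℝ) (w : n → ℝ) (K : Matrix m n ℝ) :
    trace ((vecMulVec u w)ᵀ * K) = u ⬝ᵥ (K *ᵥ w) := by
  rw [transpose_vecMulVec, vecMulVec_mul, trace_vecMulVec, dotProduct_comm, ← dotProduct_mulVec]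

theorem coe_traceOrthogonal_range_vecMulVec (w : n → ℝ) :
    (traceOrthogonal (Set.range fun u : m → ℝ => vecMulVec u w) : Set (Matrix m n ℝ)) =
      {K | K *ᵥ w = 0} := by
  refine coe_traceOrthogonal_eq_of_forall_eq_add ?_ (exists_vecMulVec_add_of_mulVec_eq_zero w)
  rintro _ ⟨u, rfl⟩ K hK
  rw [trace_transpose_vecMulVec_mul, hK, dotProduct_zero]

theorem coe_traceOrthogonal_mulVec_eq_zero (w : n → ℝ) :
    (traceOrthogonal {K : Matrix m n ℝ | K *ᵥ w = 0} : Set (Matrix m n ℝ)) =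
      Set.range (vecMulVec · w) := by
  refine coe_traceOrthogonal_eq_of_forall_eq_add ?_ fun K => ?_
  · rintro K hK _ ⟨u, rfl⟩
    rw [trace_transpose_mul_comm, trace_transpose_vecMulVec_mul, hK, dotProduct_zero]
  · obtain ⟨p, hp, q, hq, rfl⟩ := exists_vecMulVec_add_of_mulVec_eq_zero w K
    exact ⟨q, hq, p, hp, add_comm p q⟩

end TraceOrthogonal

section OrthogonalFrame

variable [Fintype m] {X : Matrix m k ℝ} {Xp : Matrix m l ℝ}

theorem transpose_fromCols_mul (U : Matrix m n ℝ) :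
    (fromCols X Xp)ᵀ * U = fromRows (Xᵀ * U) (Xpᵀ * U) := by
  rw [transpose_fromCols, fromRows_mul]

variable [Fintype k] [Fintype l]

theorem eq_mul_add_mul_of_mul_transpose_eq_one [DecidableEq m]
    (hO' : fromCols X Xp * (fromCols X Xp)ᵀ = 1) (U : Matrix m n ℝ) :
    U = X * (Xᵀ * U) + Xp * (Xpᵀ * U) := by
  rw [← fromCols_mul_fromRows, ← transpose_fromCols_mul, ← Matrix.mul_assoc, hO', Matrix.one_mul]

theorem transpose_mul_mul_add_mul [DecidableEq k] [DecidableEq l]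
    (hO : (fromCols X Xp)ᵀ * fromCols X Xp = 1) (A : Matrix k n ℝ) (B : Matrix l n ℝ) :
    Xᵀ * (X * A + Xp * B) = A ∧ Xpᵀ * (X * A + Xp * B) = B := by
  rw [← fromRows_ext_iff, ← transpose_fromCols_mul, ← fromCols_mul_fromRows, ← Matrix.mul_assoc,
    hO, Matrix.one_mul]

theorem image2_mul_add_mul [DecidableEq m] [DecidableEq k] [DecidableEq l]
    (hO : (fromCols X Xp)ᵀ * fromCols X Xp = 1) (hO' : fromCols X Xp * (fromCols X Xp)ᵀ = 1)
    (P : Set (Matrix k n ℝ)) (Q : Set (Matrix l n ℝ)) :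
    Set.image2 (X * · + Xp * ·) P Q = {U | Xᵀ * U ∈ P ∧ Xpᵀ * U ∈ Q} := by
  ext U
  constructor
  · rintro ⟨A, hA, B, hB, rfl⟩
    obtain ⟨hXA, hXpB⟩ := transpose_mul_mul_add_mul hO A B
    show Xᵀ * (X * A + Xp * B) ∈ P ∧ Xpᵀ * (X * A + Xp * B) ∈ Q
    rw [hXA, hXpB]
    exact ⟨hA, hB⟩
  · rintro ⟨hA, hB⟩
    exact ⟨_, hA, _, hB, (eq_mul_add_mul_of_mul_transpose_eq_one hO' U).symm⟩

variable [Fintype n]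

theorem trace_transpose_mul_add_mul (U : Matrix m n ℝ) (Ω : Matrix k n ℝ) (K : Matrix l n ℝ) :
    trace (Uᵀ * (X * Ω + Xp * K)) = trace ((Xᵀ * U)ᵀ * Ω) + trace ((Xpᵀ * U)ᵀ * K) := by
  rw [transpose_mul, transpose_mul, transpose_transpose, transpose_transpose, Matrix.mul_add,
    trace_add, Matrix.mul_assoc, Matrix.mul_assoc]

theorem mem_traceOrthogonal_image2_iff {P : Set (Matrix k n ℝ)} {Q : Set (Matrix l n ℝ)}
    (hP : 0 ∈ P) (hQ : 0 ∈ Q) (U : Matrix m n ℝ) :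
    U ∈ traceOrthogonal (Set.image2 (X * · + Xp * ·) P Q) ↔
      Xᵀ * U ∈ traceOrthogonal P ∧ Xpᵀ * U ∈ traceOrthogonal Q := by
  simp only [mem_traceOrthogonal, Set.forall_mem_image2, trace_transpose_mul_add_mul]
  refine ⟨fun h => ⟨fun Ω hΩ => ?_, fun K hK => ?_⟩, fun ⟨h₁, h₂⟩ Ω hΩ K hK => ?_⟩
  · simpa using h Ω hΩ 0 hQ
  · simpa using h 0 hP K hK
  · rw [h₁ Ω hΩ, h₂ K hK, add_zero]

theorem coe_traceOrthogonal_image2 [DecidableEq m] [DecidableEq k] [DecidableEq l]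
    (hO : (fromCols X Xp)ᵀ * fromCols X Xp = 1) (hO' : fromCols X Xp * (fromCols X Xp)ᵀ = 1)
    {P : Set (Matrix k n ℝ)} {Q : Set (Matrix l n ℝ)} (hP : 0 ∈ P) (hQ : 0 ∈ Q) :
    (traceOrthogonal (Set.image2 (X * · + Xp * ·) P Q) : Set (Matrix m n ℝ)) =
      Set.image2 (X * · + Xp * ·) (traceOrthogonal P : Set (Matrix k n ℝ))
        (traceOrthogonal Q : Set (Matrix l n ℝ)) := by
  rw [image2_mul_add_mul hO hO' (traceOrthogonal P : Set (Matrix k n ℝ)) (traceOrthogonal Q)]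
  ext U
  exact mem_traceOrthogonal_image2_iff hP hQ U

end OrthogonalFrame

end Matrix

theorem stmt_7_general (n q : ℕ) (hnq : q ≤ n)
    (v : Fin n → ℝ)
    (X : Matrix (Fin n) (Fin q) ℝ)
    (Xp : Matrix (Fin n) (Fin (n - q)) ℝ)
    (hO : (fromCols X Xp)ᵀ * fromCols X Xp = 1)
    (Tset Nset : Set (Matrix (Fin n) (Fin q) ℝ))
    (hT : Tset = {V | ∃ (Ω : Matrix (Fin q) (Fin q) ℝ) (K : Matrix (Fin (n - q)) (Fin q) ℝ),
      Ωᵀ = -Ω ∧ K *ᵥ (Xᵀ *ᵥ v) = 0 ∧ V = X * Ω + Xp * K})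
    (hN : Nset = {U | ∃ (S : Matrix (Fin q) (Fin q) ℝ) (u : Fin (n - q) → ℝ),
      Sᵀ = S ∧ U = X * S + vecMulVec (Xp *ᵥ u) (v ᵥ* X)}) :
    (∃ T : Submodule ℝ (Matrix (Fin n) (Fin q) ℝ),
      (T : Set (Matrix (Fin n) (Fin q) ℝ)) = Tset) ∧
    (∃ N : Submodule ℝ (Matrix (Fin n) (Fin q) ℝ),
      (N : Set (Matrix (Fin n) (Fin q) ℝ)) = Nset) ∧
    Nset = {U | ∀ V ∈ Tset, Matrix.trace (Uᵀ * V) = 0} := by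
  set w := Xᵀ *ᵥ v
  have hO' : fromCols X Xp * (fromCols X Xp)ᵀ = 1 :=
    (mul_eq_one_comm_of_card_eq (Fin q ⊕ Fin (n - q)) (Fin n) ℝ (by simp; omega)).mp hO
  have hT' : Tset = Set.image2 (X * · + Xp * ·) {Ω : Matrix (Fin q) (Fin q) ℝ | Ωᵀ = -Ω}
      {K : Matrix (Fin (n - q)) (Fin q) ℝ | K *ᵥ w = 0} := by
    rw [hT]
    ext V
    exact ⟨fun ⟨Ω, K, hΩ, hK, hV⟩ => ⟨Ω, hΩ, K, hK, hV.symm⟩,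
      fun ⟨Ω, hΩ, K, hK, hV⟩ => ⟨Ω, K, hΩ, hK, hV.symm⟩⟩
  have hN' : Nset = Set.image2 (X * · + Xp * ·) {S : Matrix (Fin q) (Fin q) ℝ | Sᵀ = S}
      (Set.range fun u : Fin (n - q) → ℝ => vecMulVec u w) := by
    rw [hN, ← mulVec_transpose]
    ext U
    exact ⟨fun ⟨S, u, hS, hU⟩ => ⟨S, hS, _, ⟨u, rfl⟩, by beta_reduce; rw [hU, mul_vecMulVec]⟩,
      fun ⟨S, hS, _, ⟨u, hu⟩, hU⟩ =>
        ⟨S, u, hS, by rw [← hU, ← hu]; beta_reduce; rw [mul_vecMulVec]⟩⟩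
  have hNT : Nset = traceOrthogonal Tset := by
    rw [hT', hN', coe_traceOrthogonal_image2 hO hO', coe_traceOrthogonal_skew,
      coe_traceOrthogonal_mulVec_eq_zero]
    exacts [by simp, zero_mulVec w]
  have hTN : Tset = traceOrthogonal Nset := by
    rw [hT', hN', coe_traceOrthogonal_image2 hO hO', coe_traceOrthogonal_symm,
      coe_traceOrthogonal_range_vecMulVec]
    exacts [transpose_zero, ⟨0, zero_vecMulVec w⟩]
  exact ⟨⟨_, hTN.symm⟩, ⟨_, hNT.symm⟩, hNT⟩

/-- For `X ∈ F_v` and `X⊥` with `(X X⊥)` orthogonal, both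
`T_X = {XΩ + X⊥K : Ωᵀ = −Ω, K (Xᵀv) = 0}` and `N_X = {XS + X⊥ u vᵀ X : Sᵀ = S}` are linear
subspaces of `ℝ^{n×q}`, and `N_X` is the orthogonal complement of `T_X` with respect to the
Frobenius inner product `⟨U, V⟩ = trace(Uᵀ V)`. -/
theorem stmt_7 (n q : ℕ) (hq : 1 ≤ q) (hnq : q ≤ n)
    (v : Fin n → ℝ) (hv : ∀ i, 0 < v i)
    (X : Matrix (Fin n) (Fin q) ℝ)
    (hX : Xᵀ * X = 1 ∧ ∃ c : Fin q → ℝ, X *ᵥ c = v)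
    (Xp : Matrix (Fin n) (Fin (n - q)) ℝ)
    (hO : (fromCols X Xp)ᵀ * fromCols X Xp = 1)
    (Tset Nset : Set (Matrix (Fin n) (Fin q) ℝ))
    (hT : Tset = {V | ∃ (Ω : Matrix (Fin q) (Fin q) ℝ) (K : Matrix (Fin (n - q)) (Fin q) ℝ),
      Ωᵀ = -Ω ∧ K *ᵥ (Xᵀ *ᵥ v) = 0 ∧ V = X * Ω + Xp * K})
    (hN : Nset = {U | ∃ (S : Matrix (Fin q) (Fin q) ℝ) (u : Fin (n - q) → ℝ),
      Sᵀ = S ∧ U = X * S + vecMulVec (Xp *ᵥ u) (v ᵥ* X)}) :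
    (∃ T : Submodule ℝ (Matrix (Fin n) (Fin q) ℝ),
      (T : Set (Matrix (Fin n) (Fin q) ℝ)) = Tset) ∧
    (∃ N : Submodule ℝ (Matrix (Fin n) (Fin q) ℝ),
      (N : Set (Matrix (Fin n) (Fin q) ℝ)) = Nset) ∧
    Nset = {U | ∀ V ∈ Tset, Matrix.trace (Uᵀ * V) = 0} :=
  stmt_7_general n q hnq v X Xp hO Tset Nset hT hN
end

section
/- Let n ≥ q ≥ 1 be integers, let v ∈ ℝⁿ have all entries positive, let X ∈ F_v, and let X⊥ be an n×(n−q) real matrix such that (X X⊥) is orthogonal. Let g : ℝ^{n×q} → ℝ be convex and Lipschitz continuous with constant L_g, let ξ ∈ ℝ^{n×q}, let μ > 0, define ℓ(η) = ⟨ξ, η⟩ + (1/(2μ))‖η‖_F² + g(X + η), and let Q be the orthogonal projection of ℝ^{n×q} (with the Frobenius inner product) onto the subspace N_X. Suppose w minimizes ℓ over the affine set {η ∈ ℝ^{n×q} : Qη = Qw}; set ε = Qw and v̂ = w − ε. If ‖ε‖_F ≤ √(4μ²L_g² + ‖v̂‖_F²/2) − 2μL_g, then for every α ∈ [0,1] one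 has ℓ(α v̂) − ℓ(0) ≤ − (α(1 − 2α)/(4μ)) ‖v̂‖_F². -/
/-!
Along the segment `s ↦ s • v̂ + ε` the objective `ℓ` is the quadratic `s ↦ ⟨ξ, v̂⟩ s +
‖v̂‖² s² / (2μ)` plus a convex function of `s`: the cross term vanishes because `v̂ ⊥ N_X`, and
the whole segment lies in the affine set `{η | Qη = Qw}` because `Q v̂ = 0`. By minimality of
`w` this function is minimized over `[0, 1]` at `s = 1`, so its left slope there is nonpositive,
which gives `⟨ξ, v̂⟩ + ‖v̂‖²/μ ≤ g(X + ε) - g(X + ε + v̂)`. Moving the base point from `X + ε`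
to `X` costs at most `2 L_g ‖ε‖` by the Lipschitz bound, and the smallness of `ε` makes this at
most `‖v̂‖²/(4μ)`, hence `⟨ξ, v̂⟩ + g(X + v̂) - g(X) ≤ -‖v̂‖²/(4μ)`. Convexity of `g` on the
segment from `X` to `X + v̂` then turns this into the bound on `ℓ(α v̂) - ℓ(0)`.
-/

open Matrix Set Filter Topology

theorem ConvexOn.comp_add_smul {E : Type*} [AddCommGroup E] [Module ℝ E] {g : E → ℝ}
    (hg : ConvexOn ℝ univ g) (x y : E) : ConvexOn ℝ univ fun s : ℝ => g (x + s • y) := by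
  have h := hg.comp_affineMap (AffineMap.lineMap x (x + y))
  rw [preimage_univ] at h
  refine h.congr fun s _ => ?_
  simp [AffineMap.lineMap_apply_module', add_comm]

theorem add_two_mul_le_sub_of_isMinOn {a c : ℝ} {h : ℝ → ℝ} (hh : ConvexOn ℝ (Icc 0 1) h)
    (hmin : IsMinOn (fun s => a * s + c * s ^ 2 + h s) (Icc 0 1) 1) :
    a + 2 * c ≤ h 0 - h 1 := by
  have hslope : ∀ t ∈ Ioc (0 : ℝ) 1, a + 2 * c + h 1 - h 0 ≤ c * t := by
    rintro t ⟨ht0, ht1⟩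
    have hφ : a * 1 + c * 1 ^ 2 + h 1 ≤ a * (1 - t) + c * (1 - t) ^ 2 + h (1 - t) :=
      isMinOn_iff.1 hmin (1 - t) ⟨by linarith, by linarith⟩
    have hconv : h (1 - t) ≤ t * h 0 + (1 - t) * h 1 := by
      simpa using hh.2 (left_mem_Icc.2 zero_le_one) (right_mem_Icc.2 zero_le_one) ht0.le
        (sub_nonneg.2 ht1) (add_sub_cancel t 1)
    have : t * (a + 2 * c + h 1 - h 0 - c * t) ≤ 0 := by nlinarith
    nlinarith
  have hlim : Tendsto (fun t => c * t) (𝓝[>] 0) (𝓝 0) := by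
    simpa using ((continuous_const_mul c).tendsto 0).mono_left nhdsWithin_le_nhds
  have := ge_of_tendsto hlim (eventually_of_mem (Ioc_mem_nhdsGT one_pos) hslope)
  linarith

theorem sq_add_two_mul_le_of_le_sqrt_sub {s b T : ℝ} (hs : 0 ≤ s) (hT : 0 ≤ T)
    (h : s ≤ √(b ^ 2 + T) - b) : s ^ 2 + 2 * b * s ≤ T := by
  rcases le_or_gt 0 (s + b) with hsb | hsb
  · have := pow_le_pow_left₀ hsb (le_sub_iff_add_le.1 h) 2
    rw [Real.sq_sqrt (by positivity)] at this
    nlinarith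
  · nlinarith

section Frobenius

variable {m p : Type*} [Fintype m] [Fintype p]

theorem Matrix.trace_transpose_mul_comm_s15 {R : Type*} [CommSemiring R] (A B : Matrix m p R) :
    trace (Aᵀ * B) = trace (Bᵀ * A) := by
  rw [← trace_transpose, transpose_mul, transpose_transpose]

theorem Matrix.trace_transpose_mul_self_nonneg (A : Matrix m p ℝ) : 0 ≤ trace (Aᵀ * A) := by
  simpa using (posSemidef_conjTranspose_mul_self A).trace_nonneg

theorem Matrix.trace_transpose_mul_self_smul_add {y e : Matrix m p ℝ} (hye : trace (yᵀ * e) = 0)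
    (s : ℝ) : trace ((s • y + e)ᵀ * (s • y + e)) = s ^ 2 * trace (yᵀ * y) + trace (eᵀ * e) := by
  have hey : trace (eᵀ * y) = 0 := by rw [trace_transpose_mul_comm_s15, hye]
  simp only [transpose_add, transpose_smul, Matrix.add_mul, Matrix.mul_add, Matrix.smul_mul,
    Matrix.mul_smul, trace_add, trace_smul, smul_eq_mul, hye, hey]
  ring

noncomputable def proxObjective (ξ X : Matrix m p ℝ) (μ : ℝ) (g : Matrix m p ℝ → ℝ)
    (η : Matrix m p ℝ) : ℝ :=
  trace (ξᵀ * η) + 1 / (2 * μ) * trace (ηᵀ * η) + g (X + η)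

variable {ξ X y e : Matrix m p ℝ} {μ Lg : ℝ} {g : Matrix m p ℝ → ℝ}

theorem proxObjective_smul_add (hye : trace (yᵀ * e) = 0) (s : ℝ) :
    proxObjective ξ X μ g (s • y + e) =
      trace (ξᵀ * y) * s + trace (yᵀ * y) / (2 * μ) * s ^ 2 +
        (g (X + e + s • y) + (trace (ξᵀ * e) + trace (eᵀ * e) / (2 * μ))) := by
  rw [proxObjective, trace_transpose_mul_self_smul_add hye, Matrix.mul_add, Matrix.mul_smul,
    trace_add, trace_smul, smul_eq_mul, add_comm (s • y) e, ← add_assoc]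
  ring

theorem proxObjective_smul (s : ℝ) :
    proxObjective ξ X μ g (s • y) =
      trace (ξᵀ * y) * s + trace (yᵀ * y) / (2 * μ) * s ^ 2 + g (X + s • y) := by
  simpa using proxObjective_smul_add (ξ := ξ) (X := X) (μ := μ) (g := g) (e := 0)
    (by simp) s

theorem proxObjective_zero : proxObjective ξ X μ g 0 = g X := by
  simp [proxObjective]

theorem le_sub_of_isMinOn_proxObjective (hg : ConvexOn ℝ univ g) (hye : trace (yᵀ * e) = 0)
    (hmin : IsMinOn (fun s : ℝ => proxObjective ξ X μ g (s • y + e)) (Icc 0 1) 1) :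
    trace (ξᵀ * y) + trace (yᵀ * y) / μ ≤ g (X + e) - g (X + e + y) := by
  have hh : ConvexOn ℝ (Icc 0 1)
      fun s : ℝ => g (X + e + s • y) + (trace (ξᵀ * e) + trace (eᵀ * e) / (2 * μ)) :=
    ((hg.comp_add_smul (X + e) y).add_const _).subset (subset_univ _) (convex_Icc 0 1)
  rw [funext (proxObjective_smul_add hye)] at hmin
  have := add_two_mul_le_sub_of_isMinOn hh hmin
  simp only [zero_smul, one_smul, add_zero] at this
  linarith [show 2 * (trace (yᵀ * y) / (2 * μ)) = trace (yᵀ * y) / μ by ring]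

theorem proxObjective_smul_sub_zero_le (hg : ConvexOn ℝ univ g) {α : ℝ} (hα0 : 0 ≤ α)
    (hα1 : α ≤ 1)
    (hdesc : trace (ξᵀ * y) + g (X + y) - g X ≤ -trace (yᵀ * y) / (4 * μ)) :
    proxObjective ξ X μ g (α • y) - proxObjective ξ X μ g 0 ≤
      -(α * (1 - 2 * α) / (4 * μ)) * trace (yᵀ * y) := by
  have hconv : g (X + α • y) ≤ (1 - α) * g X + α * g (X + y) := by
    simpa [smul_add, ← add_assoc, ← add_smul] using
      hg.2 (mem_univ X) (mem_univ (X + y)) (sub_nonneg.2 hα1) hα0 (sub_add_cancel 1 α)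
  rw [proxObjective_smul, proxObjective_zero]
  have hrhs : -(α * (1 - 2 * α) / (4 * μ)) * trace (yᵀ * y) =
      α * (-trace (yᵀ * y) / (4 * μ)) + trace (yᵀ * y) / (2 * μ) * α ^ 2 := by ring
  nlinarith [mul_le_mul_of_nonneg_left hdesc hα0]

theorem trace_add_sub_le_neg_div_of_lipschitz (hμ : 0 < μ)
    (hLip : ∀ U V, |g U - g V| ≤ Lg * √(trace ((U - V)ᵀ * (U - V))))
    (hgap : trace (ξᵀ * y) + trace (yᵀ * y) / μ ≤ g (X + e) - g (X + e + y))
    (hsmall : √(trace (eᵀ * e)) ≤ √(4 * μ ^ 2 * Lg ^ 2 + trace (yᵀ * y) / 2) - 2 * μ * Lg) :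
    trace (ξᵀ * y) + g (X + y) - g X ≤ -trace (yᵀ * y) / (4 * μ) := by
  set T := trace (yᵀ * y)
  set r := √(trace (eᵀ * e))
  have hT : 0 ≤ T := trace_transpose_mul_self_nonneg y
  have hLip₁ : g (X + y) - g (X + e + y) ≤ Lg * r := by
    have := (abs_le.1 (hLip (X + y) (X + e + y))).2
    rwa [show X + y - (X + e + y) = -e by abel, transpose_neg, Matrix.neg_mul, Matrix.mul_neg,
      neg_neg] at this
  have hLip₂ : g (X + e) - g X ≤ Lg * r := by
    simpa using (abs_le.1 (hLip (X + e) X)).2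
  have hr : r ^ 2 + 2 * (2 * μ * Lg) * r ≤ T / 2 :=
    sq_add_two_mul_le_of_le_sqrt_sub (Real.sqrt_nonneg _) (by positivity)
      (by convert hsmall using 4; ring)
  have hLr : 2 * (Lg * r) ≤ T / (4 * μ) := by
    rw [le_div_iff₀ (by positivity)]
    nlinarith [sq_nonneg r]
  have hTμ : T / μ = 4 * (T / (4 * μ)) := by field_simp
  rw [neg_div]
  linarith [div_nonneg hT (by positivity : (0 : ℝ) ≤ 4 * μ)]

end Frobenius

theorem stmt_15_general (n q : ℕ)
    (X : Matrix (Fin n) (Fin q) ℝ)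
    (Nset : Set (Matrix (Fin n) (Fin q) ℝ))
    (g : Matrix (Fin n) (Fin q) ℝ → ℝ) (hg : ConvexOn ℝ Set.univ g)
    (Lg : ℝ)
    (hLip : ∀ U V : Matrix (Fin n) (Fin q) ℝ,
      |g U - g V| ≤ Lg * Real.sqrt (Matrix.trace ((U - V)ᵀ * (U - V))))
    (ξ : Matrix (Fin n) (Fin q) ℝ) (μ : ℝ) (hμ : 0 < μ)
    (l : Matrix (Fin n) (Fin q) ℝ → ℝ)
    (hl : l = fun η => Matrix.trace (ξᵀ * η) +
      (1 / (2 * μ)) * Matrix.trace (ηᵀ * η) + g (X + η))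
    (Q : Matrix (Fin n) (Fin q) ℝ →ₗ[ℝ] Matrix (Fin n) (Fin q) ℝ)
    (hQmem : ∀ z, Q z ∈ Nset)
    (hQid : ∀ z ∈ Nset, Q z = z)
    (hQorth : ∀ z, ∀ u ∈ Nset, Matrix.trace ((z - Q z)ᵀ * u) = 0)
    (w : Matrix (Fin n) (Fin q) ℝ)
    (hwmin : ∀ η : Matrix (Fin n) (Fin q) ℝ, Q η = Q w → l w ≤ l η)
    (ε vh : Matrix (Fin n) (Fin q) ℝ) (hε : ε = Q w) (hvh : vh = w - ε)
    (hsmall : Real.sqrt (Matrix.trace (εᵀ * ε)) ≤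
      Real.sqrt (4 * μ ^ 2 * Lg ^ 2 + Matrix.trace (vhᵀ * vh) / 2) - 2 * μ * Lg) :
    ∀ α : ℝ, 0 ≤ α → α ≤ 1 →
      l (α • vh) - l 0 ≤
        -(α * (1 - 2 * α) / (4 * μ)) * Matrix.trace (vhᵀ * vh) := by
  intro α hα0 hα1
  subst hl
  obtain rfl : w = vh + ε := by rw [hvh, sub_add_cancel]
  have hεN : ε ∈ Nset := hε ▸ hQmem _
  have hQε : Q ε = ε := hQid ε hεN
  have hQvh : Q vh = 0 := by
    rw [map_add, hQε] at hε
    exact add_eq_right.1 hε.symm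
  have horth : trace (vhᵀ * ε) = 0 := by
    simpa [← hε] using hQorth (vh + ε) ε hεN
  have hmin : IsMinOn (fun s : ℝ => proxObjective ξ X μ g (s • vh + ε)) (Icc 0 1) 1 :=
    isMinOn_iff.2 fun s _ => by
      rw [one_smul]
      exact hwmin _ (by rw [← hε, map_add, map_smul, hQvh, smul_zero, zero_add, hQε])
  have hgap := le_sub_of_isMinOn_proxObjective hg horth hmin
  exact proxObjective_smul_sub_zero_le hg hα0 hα1 <|
    trace_add_sub_le_neg_div_of_lipschitz hμ hLip hgap hsmall

/-- In the setting of Statement 14, with `ε = Qw` and `v̂ = w − ε`, if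
`‖ε‖_F ≤ √(4μ²L_g² + ‖v̂‖_F²/2) − 2μL_g`, then for every `α ∈ [0, 1]`,
`ℓ(α v̂) − ℓ(0) ≤ −(α(1 − 2α)/(4μ))‖v̂‖_F²`. -/
theorem stmt_15 (n q : ℕ) (hq : 1 ≤ q) (hnq : q ≤ n)
    (v : Fin n → ℝ) (hv : ∀ i, 0 < v i)
    (X : Matrix (Fin n) (Fin q) ℝ)
    (hX : Xᵀ * X = 1 ∧ ∃ c : Fin q → ℝ, X *ᵥ c = v)
    (Xp : Matrix (Fin n) (Fin (n - q)) ℝ)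
    (hO : (fromCols X Xp)ᵀ * fromCols X Xp = 1)
    (Nset : Set (Matrix (Fin n) (Fin q) ℝ))
    (hN : Nset = {U | ∃ (S : Matrix (Fin q) (Fin q) ℝ) (u : Fin (n - q) → ℝ),
      Sᵀ = S ∧ U = X * S + vecMulVec (Xp *ᵥ u) (v ᵥ* X)})
    (g : Matrix (Fin n) (Fin q) ℝ → ℝ) (hg : ConvexOn ℝ Set.univ g)
    (Lg : ℝ)
    (hLip : ∀ U V : Matrix (Fin n) (Fin q) ℝ,
      |g U - g V| ≤ Lg * Real.sqrt (Matrix.trace ((U - V)ᵀ * (U - V))))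
    (ξ : Matrix (Fin n) (Fin q) ℝ) (μ : ℝ) (hμ : 0 < μ)
    (l : Matrix (Fin n) (Fin q) ℝ → ℝ)
    (hl : l = fun η => Matrix.trace (ξᵀ * η) +
      (1 / (2 * μ)) * Matrix.trace (ηᵀ * η) + g (X + η))
    (Q : Matrix (Fin n) (Fin q) ℝ →ₗ[ℝ] Matrix (Fin n) (Fin q) ℝ)
    (hQmem : ∀ z, Q z ∈ Nset)
    (hQid : ∀ z ∈ Nset, Q z = z)
    (hQorth : ∀ z, ∀ u ∈ Nset, Matrix.trace ((z - Q z)ᵀ * u) = 0)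
    (w : Matrix (Fin n) (Fin q) ℝ)
    (hwmin : ∀ η : Matrix (Fin n) (Fin q) ℝ, Q η = Q w → l w ≤ l η)
    (ε vh : Matrix (Fin n) (Fin q) ℝ) (hε : ε = Q w) (hvh : vh = w - ε)
    (hsmall : Real.sqrt (Matrix.trace (εᵀ * ε)) ≤
      Real.sqrt (4 * μ ^ 2 * Lg ^ 2 + Matrix.trace (vhᵀ * vh) / 2) - 2 * μ * Lg) :
    ∀ α : ℝ, 0 ≤ α → α ≤ 1 →
      l (α • vh) - l 0 ≤
        -(α * (1 - 2 * α) / (4 * μ)) * Matrix.trace (vhᵀ * vh) :=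
  stmt_15_general n q X Nset g hg Lg hLip ξ μ hμ l hl Q hQmem hQid hQorth w hwmin ε vh hε hvh hsmall
end
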